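/- arXiv:2404.18835 — 6 statements merged into one kernel-verified Lean document; each statement's English description precedes it below -/
import Mathlib

section
/- Let A = {H₁,…,Hₙ} be a generic essential arrangement in K^k (every set of at most k of the forms α_i is linearly independent). Then for every S ⊆ {1,…,n}, dim D_S = min{n, n + k − |S|}. In particular D_S is a hyperplane in K^n if and only if |S| = k + 1. -/
/-!
`D_S` is the preimage, under the restriction `K^n → K^S`, of the column space of the matrix whose
rows are the `α i` with `i ∈ S`. Since the restriction is surjective with kernel of dimension
`n - |S|`, `dim D_S = n - |S| + rank`. Genericity makes the rank `min |S| k`: a subfamily of size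
`min |S| k` is independent, and no family in `K^k` spans more than `k` dimensions.
-/

open Module

theorem Submodule.finrank_comap_add_finrank_of_surjective {K V W : Type*} [DivisionRing K]
    [AddCommGroup V] [Module K V] [AddCommGroup W] [Module K W] [FiniteDimensional K V]
    {f : V →ₗ[K] W} (hf : Function.Surjective f) (p : Submodule K W) :
    finrank K (p.comap f) + finrank K W = finrank K V + finrank K p := by
  have : FiniteDimensional K W := Module.Finite.of_surjective f hf
  have hrange : LinearMap.range (p.mkQ ∘ₗ f) = ⊤ :=
    LinearMap.range_eq_top.2 (p.mkQ_surjective.comp hf)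
  have hker : LinearMap.ker (p.mkQ ∘ₗ f) = p.comap f := by
    rw [LinearMap.ker_comp, Submodule.ker_mkQ]
  have hrankNullity := LinearMap.finrank_range_add_finrank_ker (p.mkQ ∘ₗ f)
  rw [hrange, hker, finrank_top] at hrankNullity
  have hquot := p.finrank_quotient_add_finrank
  omega

theorem finrank_span_eq_min_of_linearIndependent_of_card_le {K V ι : Type*} [DivisionRing K]
    [AddCommGroup V] [Module K V] [FiniteDimensional K V] {v : ι → V}
    (hgen : ∀ S : Finset ι, S.card ≤ finrank K V → LinearIndependent K (fun i : S => v i))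
    (S : Finset ι) :
    finrank K (Submodule.span K (Set.range fun i : S => v i)) = min S.card (finrank K V) := by
  obtain ⟨T, hTS, hT⟩ := S.exists_subset_card_eq (min_le_left S.card (finrank K V))
  have hTS_span : Submodule.span K (Set.range fun i : T => v i) ≤
      Submodule.span K (Set.range fun i : S => v i) :=
    Submodule.span_mono (by rintro _ ⟨i, rfl⟩; exact ⟨⟨i, hTS i.2⟩, rfl⟩)
  have hT_finrank : finrank K (Submodule.span K (Set.range fun i : T => v i)) =
      min S.card (finrank K V) := by
    rw [finrank_span_eq_card (hgen T (hT ▸ min_le_right _ _)), Fintype.card_coe, hT]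
  refine le_antisymm (le_min ?_ (Submodule.finrank_le _))
    (hT_finrank ▸ Submodule.finrank_mono hTS_span)
  exact (finrank_range_le_card (R := K) fun i : S => v i).trans_eq (Fintype.card_coe S)

section SolvableRHS

variable {K ι κ : Type*} [Field K] [Fintype κ]

def solvableRHS (α : ι → κ → K) (S : Finset ι) : Submodule K (ι → K) :=
  (LinearMap.range (Matrix.of fun i : S => α i).mulVecLin).comap
    (LinearMap.funLeft K K ((↑) : S → ι))

theorem coe_solvableRHS (α : ι → κ → K) (S : Finset ι) :
    (solvableRHS α S : Set (ι → K)) =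
      {t | ∃ x : κ → K, ∀ i ∈ S, ∑ j, α i j * x j = t i} := by
  ext t
  simp [solvableRHS, funext_iff, Matrix.mulVec, dotProduct]

theorem finrank_solvableRHS_add_card [Fintype ι] (α : ι → κ → K) (S : Finset ι) :
    finrank K (solvableRHS α S) + S.card =
      Fintype.card ι + (Matrix.of fun i : S => α i).rank := by
  have hcomap := Submodule.finrank_comap_add_finrank_of_surjective
    (LinearMap.funLeft_surjective_of_injective K K _ Subtype.val_injective)
    (LinearMap.range (Matrix.of fun i : S => α i).mulVecLin)
  rwa [Module.finrank_fintype_fun_eq_card, Module.finrank_fintype_fun_eq_card,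
    Fintype.card_coe] at hcomap

end SolvableRHS

theorem dS_dim_generic_general {K : Type*} [Field K] {n k : ℕ}
    (α : Fin n → (Fin k → K))
    (hgen : ∀ S : Finset (Fin n), S.card ≤ k →
      LinearIndependent K (fun i : S => α i)) :
    ∀ S : Finset (Fin n),
      (∃ V : Submodule K (Fin n → K),
        (V : Set (Fin n → K)) =
          {t | ∃ x : Fin k → K, ∀ i ∈ S, ∑ j, α i j * x j = t i}) ∧
      (∀ V : Submodule K (Fin n → K),
        (V : Set (Fin n → K)) =
          {t | ∃ x : Fin k → K, ∀ i ∈ S, ∑ j, α i j * x j = t i} →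
        Module.finrank K V = min n (n + k - S.card) ∧
        (Module.finrank K V + 1 = n ↔ S.card = k + 1)) := by
  intro S
  have hrank : (Matrix.of fun i : S => α i).rank = min S.card k := by
    have hspan := finrank_span_eq_min_of_linearIndependent_of_card_le (K := K) (v := α)
      (by rwa [finrank_fin_fun]) S
    rw [finrank_fin_fun] at hspan
    rw [Matrix.rank_eq_finrank_span_row]
    exact hspan
  have hSn : S.card ≤ n := by simpa using S.card_le_univ
  have hdim : finrank K (solvableRHS α S) = min n (n + k - S.card) := by
    have hsum := finrank_solvableRHS_add_card α S
    rw [hrank, Fintype.card_fin] at hsum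
    omega
  refine ⟨⟨solvableRHS α S, coe_solvableRHS α S⟩, fun V hV => ?_⟩
  obtain rfl : V = solvableRHS α S := SetLike.coe_injective (hV.trans (coe_solvableRHS α S).symm)
  exact ⟨hdim, by omega⟩

/-- For a generic essential arrangement of `n` hyperplanes in `K^k`
(any at most `k` of the normals are linearly independent), `dim D_S = min{n, n+k−|S|}`
for every `S ⊆ [n]`; in particular `D_S` is a hyperplane iff `|S| = k+1`. -/
theorem dS_dim_generic {K : Type*} [Field K] {n k : ℕ}
    (hk : 1 ≤ k) (hkn : k ≤ n)
    (α : Fin n → (Fin k → K))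
    (hgen : ∀ S : Finset (Fin n), S.card ≤ k →
      LinearIndependent K (fun i : S => α i)) :
    ∀ S : Finset (Fin n),
      (∃ V : Submodule K (Fin n → K),
        (V : Set (Fin n → K)) =
          {t | ∃ x : Fin k → K, ∀ i ∈ S, ∑ j, α i j * x j = t i}) ∧
      (∀ V : Submodule K (Fin n → K),
        (V : Set (Fin n → K)) =
          {t | ∃ x : Fin k → K, ∀ i ∈ S, ∑ j, α i j * x j = t i} →
        Module.finrank K V = min n (n + k - S.card) ∧
        (Module.finrank K V + 1 = n ↔ S.card = k + 1)) :=
  dS_dim_generic_general α hgen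
end

section
/- For a generic arrangement A of n hyperplanes in K^k and C = {i₁ < ⋯ < i_{k+1}} ⊆ {1,…,n}, the hyperplane D_C ⊆ K^n has normal vector α_C given by the Laplace expansion of the (k+1)×(k+1) matrix with first row (e*_{i₁},…,e*_{i_{k+1}}) and remaining rows the coordinates of α_{i₁},…,α_{i_{k+1}}; i.e., α_C = Σ_j (−1)^{j+1} det(α_{i₁},…,α̂_{i_j},…,α_{i_{k+1}}) e*_{i_j}, and D_C = ker α_C. -/
/-!
Write `b = (t (C j))_j` and let `v₁, …, v_k ∈ K^{k+1}` be the columns of the matrix with rows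
`α (C j)`. Then `t ∈ D_C` says exactly that `b` lies in the span of the `v_a`. By genericity the
rows `α (C 0), …, α (C (k-1))` are independent, so the `v_a` are independent, and `b` lies in
their span iff the square matrix with rows `b, v₁, …, v_k` is singular. Expanding that
determinant along its first row gives `α_C(t)`.
-/

open Function Submodule

theorem Matrix.det_of_cons_eq_zero_iff {K : Type*} [Field K] {k : ℕ}
    {v : Fin k → Fin (k + 1) → K} (hv : LinearIndependent K v) (b : Fin (k + 1) → K) :
    (Matrix.of (Fin.cons b v : Fin (k + 1) → Fin (k + 1) → K)).det = 0 ↔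
      b ∈ span K (Set.range v) := by
  rw [← not_iff_not, ← ne_eq, ← isUnit_iff_ne_zero, ← Matrix.isUnit_iff_isUnit_det,
    ← Matrix.linearIndependent_rows_iff_isUnit]
  exact linearIndependent_finCons.trans (and_iff_right hv)

theorem Matrix.det_of_cons_eq_sum {R : Type*} [CommRing R] {k : ℕ}
    (b : Fin (k + 1) → R) (v : Fin k → Fin (k + 1) → R) :
    (Matrix.of (Fin.cons b v : Fin (k + 1) → Fin (k + 1) → R)).det =
      ∑ j : Fin (k + 1),
        (-1 : R) ^ (j : ℕ) * (Matrix.of fun a c => v a (j.succAbove c)).det * b j := by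
  rw [Matrix.det_succ_row_zero]
  refine Finset.sum_congr rfl fun j _ => ?_
  rw [mul_right_comm]
  rfl

theorem Matrix.linearIndependent_col_of_row_comp {m n K : Type*} [Field K] [Fintype n]
    [DecidableEq n] {M : Matrix m n K} {e : n → m} (h : LinearIndependent K (M.row ∘ e)) :
    LinearIndependent K M.col :=
  have hsq : LinearIndependent K (M.submatrix e id).col :=
    linearIndependent_cols_iff_isUnit.2 (linearIndependent_rows_iff_isUnit.1 h)
  .of_comp (LinearMap.funLeft K K e) hsq

theorem linearIndependent_comp_of_forall_card_le {K V ι : Type*} [Semiring K]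
    [AddCommMonoid V] [Module K V] {α : ι → V} {k : ℕ}
    (hgen : ∀ S : Finset ι, S.card ≤ k → LinearIndependent K (fun i : S => α i))
    {m : ℕ} {f : Fin m → ι} (hf : Injective f) (hm : m ≤ k) :
    LinearIndependent K (α ∘ f) := by
  classical
  have := hgen (Finset.univ.image f) (Finset.card_image_le.trans (by simpa using hm))
  exact this.comp (fun p => ⟨f p, by simp⟩) fun p q h => hf (congrArg Subtype.val h)

/-- For a generic arrangement of `n` hyperplanes in `K^k` and a
`(k+1)`-subset `C = {i₁ < ⋯ < i_{k+1}}`, the hyperplane `D_C` is the kernel of the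
linear form `α_C = Σ_j (−1)^{j+1} det(α_{i₁},…,α̂_{i_j},…,α_{i_{k+1}}) e*_{i_j}`
obtained by Laplace expansion along the first row. (With 0-based `j : Fin (k+1)`
the sign `(−1)^{j+1}` of the 1-based expansion becomes `(−1)^j`.) -/
theorem dC_normal_laplace {K : Type*} [Field K] {n k : ℕ}
    (α : Fin n → (Fin k → K))
    (hgen : ∀ S : Finset (Fin n), S.card ≤ k →
      LinearIndependent K (fun i : S => α i))
    (C : Fin (k + 1) → Fin n) (hC : StrictMono C) :
    {t : Fin n → K | ∃ x : Fin k → K,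
        ∀ i ∈ Set.range C, ∑ j, α i j * x j = t i} =
      {t : Fin n → K |
        ∑ j : Fin (k + 1), (-1 : K) ^ (j : ℕ) *
          (Matrix.of fun a b : Fin k => α (C (Fin.succAbove j b)) a).det * t (C j)
          = 0} := by
  set M : Matrix (Fin (k + 1)) (Fin k) K := Matrix.of fun j a => α (C j) a
  have hcols : LinearIndependent K M.col :=
    Matrix.linearIndependent_col_of_row_comp (e := Fin.castSucc) <|
      linearIndependent_comp_of_forall_card_le hgen
        (hC.injective.comp (Fin.castSucc_injective k)) le_rfl
  have hcomb (x : Fin k → K) : ∑ a, x a • M.col a = fun j => ∑ a, α (C j) a * x a := by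
    ext j
    simp [M, Matrix.col, Finset.sum_apply, mul_comm]
  ext t
  calc _ ↔ (fun j => t (C j)) ∈ span K (Set.range M.col) := by
        simp_rw [mem_span_range_iff_exists_fun, hcomb, funext_iff, Set.forall_mem_range]; rfl
    _ ↔ (Matrix.of (Fin.cons (fun j => t (C j)) M.col)).det = 0 :=
        (Matrix.det_of_cons_eq_zero_iff hcols _).symm
    _ ↔ _ := by rw [Matrix.det_of_cons_eq_sum]; rfl
end

section
/- Let A be a generic arrangement of n hyperplanes in K^k and let B(A) = {D_C : C ⊆ [n], |C| = k+1} be the discriminantal arrangement in K^n. For any intersection X of hyperplanes of B(A) with canonical presentation T(X) (the set of maximal index sets S with X ⊆ D_S and X ⊄ D_{S∪{i}} for i ∉ S), one has rank X ≤ ν(T(X)) := Σ_{S ∈ T(X)} (|S| − k). -/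
/-! The canonical presentation `T(X)` is a finite family of maximal sets `S` with `X ≤ D_S`; every
`C ∈ 𝒞` lies in one of them, and `D_S` shrinks as `S` grows, so `X = ⋂_{S ∈ T(X)} D_S`. By
semimodularity of dimension, the codimension of a finite intersection is at most the sum of the
codimensions. Finally `D_S` is the preimage, under restriction to the coordinates in `S`, of the
column space of the `S × k` matrix with rows `α i`; for `|S| ≥ k` genericity makes that matrix of
rank `k`, so `D_S` has codimension `|S| - k`. -/

open scoped Classical

variable {K : Type*} [Field K] {ι : Type*} {k : ℕ}

/-- The subspace `D_S` of translation vectors `t` for which the translated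
hyperplanes `{x | ⟨α i, x⟩ = t i}`, `i ∈ S`, have a common point. -/
def DSub (α : ι → Fin k → K) (S : Set ι) : Submodule K (ι → K) where
  carrier := {t | ∃ x : Fin k → K, ∀ i ∈ S, ∑ j, α i j * x j = t i}
  zero_mem' := ⟨0, fun i _ => by simp⟩
  add_mem' := by
    rintro a b ⟨x, hx⟩ ⟨y, hy⟩
    exact ⟨x + y, fun i hi => by simp [mul_add, Finset.sum_add_distrib, hx i hi, hy i hi]⟩
  smul_mem' := by
    rintro c a ⟨x, hx⟩
    refine ⟨c • x, fun i hi => ?_⟩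
    simp only [Pi.smul_apply, smul_eq_mul, ← hx i hi, Finset.mul_sum]
    congr 1; ext j; ring

lemma finrank_sub_finrank_comap_of_surjective {V W : Type*} [AddCommGroup V] [Module K V]
    [AddCommGroup W] [Module K W] [FiniteDimensional K V] [FiniteDimensional K W]
    {f : V →ₗ[K] W} (hf : Function.Surjective f) (U : Submodule K W) :
    Module.finrank K V - Module.finrank K (U.comap f) =
      Module.finrank K W - Module.finrank K U := by
  have hker : LinearMap.ker (U.mkQ ∘ₗ f) = U.comap f := by
    rw [LinearMap.ker_comp, Submodule.ker_mkQ]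
  have e : (V ⧸ U.comap f) ≃ₗ[K] W ⧸ U :=
    (Submodule.quotEquivOfEq _ _ hker.symm).trans
      ((U.mkQ ∘ₗ f).quotKerEquivOfSurjective (U.mkQ_surjective.comp hf))
  rw [← Submodule.finrank_quotient, ← Submodule.finrank_quotient, e.finrank_eq]

lemma finrank_sub_finrank_inf_le_sum {V β : Type*} [AddCommGroup V] [Module K V]
    [FiniteDimensional K V] (F : Finset β) (f : β → Submodule K V) :
    Module.finrank K V - Module.finrank K ↥(F.inf f) ≤
      ∑ b ∈ F, (Module.finrank K V - Module.finrank K (f b)) := by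
  induction F using Finset.induction_on with
  | empty => rw [Finset.inf_empty, Finset.sum_empty, finrank_top, Nat.sub_self]
  | insert a F ha ih =>
    rw [Finset.inf_insert, Finset.sum_insert ha]
    have := Submodule.finrank_sup_add_finrank_inf_eq (f a) (F.inf f)
    have := Submodule.finrank_le (f a ⊔ F.inf f)
    have := Submodule.finrank_le (F.inf f)
    omega

lemma DSub_antitone (α : ι → Fin k → K) : Antitone (DSub α) :=
  fun _ _ h _ ⟨x, hx⟩ => ⟨x, fun i hi => hx i (h hi)⟩

lemma DSub_eq_comap (α : ι → Fin k → K) (S : Finset ι) :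
    DSub α (S : Set ι) = (LinearMap.range (Matrix.of fun i : S => α i).mulVecLin).comap
      (LinearMap.funLeft K K ((↑) : S → ι)) := by
  ext t
  simp [DSub, Matrix.mulVec, dotProduct, funext_iff]

lemma card_sub_finrank_DSub (α : ι → Fin k → K) [Fintype ι] (S : Finset ι) :
    Fintype.card ι - Module.finrank K (DSub α (S : Set ι)) =
      S.card - (Matrix.of fun i : S => α i).rank := by
  rw [DSub_eq_comap, ← Module.finrank_fintype_fun_eq_card (R := K),
    finrank_sub_finrank_comap_of_surjective
    (LinearMap.funLeft_surjective_of_injective K K _ Subtype.val_injective)]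
  simp [Matrix.rank]

lemma card_le_rank_of_linearIndependent (α : ι → Fin k → K) {T S : Finset ι} (hTS : T ⊆ S)
    (hT : LinearIndependent K fun i : T => α i) : T.card ≤ (Matrix.of fun i : S => α i).rank := by
  rw [Matrix.rank_eq_finrank_span_row, ← Fintype.card_coe T, ← finrank_span_eq_card hT]
  refine Submodule.finrank_mono (Submodule.span_mono ?_)
  rintro _ ⟨i, rfl⟩
  exact ⟨⟨i, hTS i.2⟩, rfl⟩

lemma card_sub_finrank_DSub_le (α : ι → Fin k → K) [Fintype ι]
    (hgen : ∀ S : Finset ι, S.card ≤ k → LinearIndependent K (fun i : S => α i))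
    {S : Finset ι} (hS : k ≤ S.card) :
    Fintype.card ι - Module.finrank K (DSub α (S : Set ι)) ≤ S.card - k := by
  obtain ⟨T, hTS, hT⟩ := Finset.exists_subset_card_eq hS
  have := card_le_rank_of_linearIndependent α hTS (hgen T hT.le)
  rw [card_sub_finrank_DSub]
  omega

noncomputable def canonicalPresentation [Fintype ι] (α : ι → Fin k → K)
    (X : Submodule K (ι → K)) : Finset (Finset ι) :=
  Finset.univ.filter fun S => k + 1 ≤ S.card ∧ X ≤ DSub α (S : Set ι) ∧
    ∀ i ∉ S, ¬ X ≤ DSub α ((insert i S : Finset ι) : Set ι)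

lemma mem_canonicalPresentation [Fintype ι] {α : ι → Fin k → K} {X : Submodule K (ι → K)}
    {S : Finset ι} :
    S ∈ canonicalPresentation α X ↔ k + 1 ≤ S.card ∧ X ≤ DSub α (S : Set ι) ∧
      ∀ i ∉ S, ¬ X ≤ DSub α ((insert i S : Finset ι) : Set ι) := by
  simp [canonicalPresentation]

lemma exists_mem_canonicalPresentation_superset [Fintype ι] (α : ι → Fin k → K)
    {X : Submodule K (ι → K)} {C : Finset ι} (hC : k + 1 ≤ C.card) (hXC : X ≤ DSub α C) :
    ∃ S ∈ canonicalPresentation α X, C ⊆ S := by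
  obtain ⟨S, hCS, hXS, hmax⟩ :=
    (Set.toFinite {S : Finset ι | X ≤ DSub α S}).exists_le_maximal (a := C) hXC
  refine ⟨S, mem_canonicalPresentation.mpr ⟨hC.trans (Finset.card_le_card hCS), hXS, ?_⟩, hCS⟩
  exact fun i hi hXiS => hi (hmax hXiS (Finset.subset_insert i S) (Finset.mem_insert_self i S))

lemma inf_canonicalPresentation_eq [Fintype ι] (α : ι → Fin k → K) {𝒞 : Finset (Finset ι)}
    (h𝒞 : ∀ C ∈ 𝒞, k + 1 ≤ C.card) :
    (canonicalPresentation α (⨅ C ∈ 𝒞, DSub α C)).inf (fun S => DSub α S) =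
      ⨅ C ∈ 𝒞, DSub α C := by
  refine le_antisymm (le_iInf₂ fun C hC => ?_) (Finset.le_inf fun S hS => ?_)
  · obtain ⟨S, hS, hCS⟩ :=
      exists_mem_canonicalPresentation_superset α (h𝒞 C hC)
        (iInf₂_le C hC : ⨅ C ∈ 𝒞, DSub α (C : Set ι) ≤ _)
    exact (Finset.inf_le hS).trans (DSub_antitone α (by exact_mod_cast hCS))
  · exact (mem_canonicalPresentation.mp hS).2.1

/-- For a generic arrangement `A` of `n` hyperplanes in `K^k` and any
intersection `X` of hyperplanes `D_C` (`|C| = k+1`) of the discriminantal arrangement,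
with canonical presentation `T(X)` (the maximal sets `S` with `X ⊆ D_S`),
one has `rank X ≤ ν(T(X)) = Σ_{S ∈ T(X)} (|S| − k)`, where `rank` is the codimension. -/
theorem rank_le_nu_canonical_presentation {K : Type*} [Field K] {n k : ℕ}
    (α : Fin n → (Fin k → K))
    (hgen : ∀ S : Finset (Fin n), S.card ≤ k →
      LinearIndependent K (fun i : S => α i))
    (𝒞 : Finset (Finset (Fin n))) (h𝒞 : ∀ C ∈ 𝒞, C.card = k + 1) :
    n - Module.finrank K ↥(⨅ C ∈ 𝒞, DSub α (C : Set (Fin n))) ≤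
      ∑ S : Finset (Fin n),
        if (k + 1 ≤ S.card ∧
            (⨅ C ∈ 𝒞, DSub α (C : Set (Fin n))) ≤ DSub α (S : Set (Fin n)) ∧
            ∀ i ∉ S, ¬ (⨅ C ∈ 𝒞, DSub α (C : Set (Fin n))) ≤
              DSub α ((insert i S : Finset (Fin n)) : Set (Fin n)))
        then S.card - k else 0 := by
  let T := canonicalPresentation α (⨅ C ∈ 𝒞, DSub α (C : Set (Fin n)))
  calc n - Module.finrank K ↥(⨅ C ∈ 𝒞, DSub α (C : Set (Fin n)))
      = n - Module.finrank K ↥(T.inf fun S => DSub α (S : Set (Fin n))) := by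
        rw [inf_canonicalPresentation_eq α fun C hC => (h𝒞 C hC).ge]
    _ ≤ ∑ S ∈ T, (n - Module.finrank K (DSub α (S : Set (Fin n)))) := by
        simpa using finrank_sub_finrank_inf_le_sum (K := K) (V := Fin n → K) T _
    _ ≤ ∑ S ∈ T, (S.card - k) := Finset.sum_le_sum fun S hS => by
        simpa using card_sub_finrank_DSub_le α hgen
          (Nat.le_of_succ_le (mem_canonicalPresentation.mp hS).1)
    -- the two sides differ only in the `Decidable` instance of the quantifier over `Fin n`
    _ = _ := by simp only [T, canonicalPresentation, Finset.sum_filter]; congr!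
end

section
/- Deletion of a parallel hyperplane: Let A = {H₁,…,Hₙ} be an arrangement in K^k with H_i = H_j for some i ≠ j (equal as multiset members, i.e., α_i, α_j parallel). Then the restriction of the discriminantal arrangement B(A) to the hyperplane D_{ij} = {t : t lies so that H_i^{t_i} = H_j^{t_j}} is linearly equivalent to the discriminantal arrangement B(A \ H_i); the equivalence is induced by the isomorphism D_{ij} ≅ K^{n−1}, t ↦ (t_l)_{l ≠ i}. -/
variable {K : Type*} [Field K] {ι : Type*} {k : ℕ}

/-- `C` is a circuit of the (multi)arrangement with normals `α`: a minimal linearly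
dependent set of normals. -/
def IsCircuit (α : ι → Fin k → K) (C : Set ι) : Prop :=
  (¬ LinearIndependent K (fun l : C => α l)) ∧
    ∀ l ∈ C, LinearIndependent K (fun m : ((C \ {l} : Set ι)) => α m)

/-! On `D_{ij}` one has `t i = c * t j`, so forgetting the coordinate `t i` identifies `D_{ij}`
with `K^{n-1}`, and on `D_{ij}` the equation indexed by `i` may be traded for the one indexed
by `j`. A circuit `C` with `D_C ≠ D_{ij}` cannot contain both `i` and `j`, since two parallel
normals already form a circuit; so swapping `i` for `j` turns it into a circuit avoiding `i`
with the same trace `D_C ∩ D_{ij}`. For a circuit avoiding `i`, `D_C` is the preimage under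
the restriction map of the subspace `D_C` of `A \ H_i`, and the restriction map is onto. -/

theorem linearIndepOn_iff_of_bijOn_smul {R M ι' : Type*} [Ring R] [AddCommGroup M] [Module R M]
    {α : ι → M} {α' : ι' → M} {φ : ι' → ι} {S' : Set ι'} {S : Set ι}
    (hφ : Set.BijOn φ S' S) (d : ι' → Rˣ) (hα' : ∀ m ∈ S', α' m = d m • α (φ m)) :
    LinearIndepOn R α' S' ↔ LinearIndepOn R α S := by
  have h : (fun m : S' => α' m) = (fun m : S' => d m) • (fun m : S => α m) ∘ hφ.equiv φ :=
    funext fun m => hα' m m.2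
  rw [LinearIndepOn, h, LinearIndependent.units_smul_iff, linearIndependent_equiv]
  rfl

theorem isCircuit_iff_of_bijOn_smul {ι' : Type*} {α : ι → Fin k → K} {α' : ι' → Fin k → K}
    {φ : ι' → ι} {C' : Set ι'} {C : Set ι} (hφ : Set.BijOn φ C' C) (d : ι' → Kˣ)
    (hα' : ∀ m ∈ C', α' m = d m • α (φ m)) :
    IsCircuit α' C' ↔ IsCircuit α C := by
  have key {S' : Set ι'} {S : Set ι} (hS : Set.BijOn φ S' S) (hSC : S' ⊆ C') :
      LinearIndepOn K α' S' ↔ LinearIndepOn K α S :=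
    linearIndepOn_iff_of_bijOn_smul hS d fun m hm => hα' m (hSC hm)
  refine ⟨fun ⟨hdep, hmin⟩ => ⟨(key hφ le_rfl).not.1 hdep, fun l hl => ?_⟩,
    fun ⟨hdep, hmin⟩ => ⟨(key hφ le_rfl).not.2 hdep, fun m hm => ?_⟩⟩
  · obtain ⟨m, hm, rfl⟩ := hφ.surjOn hl
    exact (key (hφ.sdiff_singleton hm) Set.sdiff_subset).1 (hmin m hm)
  · exact (key (hφ.sdiff_singleton hm) Set.sdiff_subset).2 (hmin (φ m) (hφ.mapsTo hm))

theorem isCircuit_comp_iff_image {ι' : Type*} {α : ι → Fin k → K} {φ : ι' → ι}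
    (hφ : Function.Injective φ) (C' : Set ι') :
    IsCircuit (fun m => α (φ m)) C' ↔ IsCircuit α (φ '' C') :=
  isCircuit_iff_of_bijOn_smul hφ.injOn.bijOn_image 1 fun _ _ => (one_smul _ _).symm

theorem isCircuit_insert_iff_of_eq_smul {α : ι → Fin k → K} {i j : ι} {S : Set ι}
    (hiS : i ∉ S) (hjS : j ∉ S) {c : K} (hc : c ≠ 0) (hpar : α i = c • α j) :
    IsCircuit α (insert i S) ↔ IsCircuit α (insert j S) := by
  classical
  have hS : Set.BijOn (Equiv.swap i j) S S :=
    Set.bijOn_id S |>.congr fun l hl =>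
      (Equiv.swap_apply_of_ne_of_ne (ne_of_mem_of_not_mem hl hiS)
        (ne_of_mem_of_not_mem hl hjS)).symm
  have hbij : Set.BijOn (Equiv.swap i j) (insert i S) (insert j S) := by
    simpa using hS.insert (a := i) (by simpa using hjS)
  refine isCircuit_iff_of_bijOn_smul hbij (fun m => if m = i then Units.mk0 c hc else 1) ?_
  rintro m (rfl | hm)
  · simpa using hpar
  · simp [ne_of_mem_of_not_mem hm hiS, Equiv.swap_apply_of_ne_of_ne,
      ne_of_mem_of_not_mem hm hjS]

theorem IsCircuit.eq_pair_of_eq_smul {α : ι → Fin k → K} {C : Set ι} (hC : IsCircuit α C)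
    {i j : ι} (hij : i ≠ j) (hi : i ∈ C) (hj : j ∈ C) {c : K} (hpar : α i = c • α j) :
    C = {i, j} := by
  by_contra hne
  have hsub : ({i, j} : Set ι) ⊂ C :=
    (Set.insert_subset hi (Set.singleton_subset_iff.2 hj)).ssubset_of_ne (Ne.symm hne)
  obtain ⟨l, hlC, hl⟩ := Set.exists_of_ssubset hsub
  have hpair : LinearIndepOn K α {i, j} :=
    (show LinearIndepOn K α (C \ {l}) from hC.2 l hlC).mono fun m hm =>
      ⟨hsub.subset hm, fun hml => hl (hml ▸ hm)⟩
  exact one_ne_zero ((LinearIndepOn.pair_iff α hij).1 hpair 1 (-c) (by simp [hpar])).1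

theorem mem_DSub {α : ι → Fin k → K} {S : Set ι} {t : ι → K} :
    t ∈ DSub α S ↔ ∃ x, ∀ i ∈ S, α i ⬝ᵥ x = t i :=
  Iff.rfl

theorem coe_DSub_pair {α : ι → Fin k → K} {i j : ι} {c : K} (hj : α j ≠ 0)
    (hpar : α i = c • α j) :
    (DSub α {i, j} : Set (ι → K)) = {t | t i = c * t j} := by
  classical
  ext t
  simp only [SetLike.mem_coe, mem_DSub, Set.forall_mem_insert, Set.mem_singleton_iff, forall_eq,
    hpar, smul_dotProduct, smul_eq_mul, Set.mem_ofPred_eq]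
  constructor
  · rintro ⟨x, hi, hj⟩
    rw [← hi, hj]
  · intro ht
    obtain ⟨m, hm⟩ := Function.ne_iff.1 hj
    refine ⟨Pi.single m (t j / α j m), ?_, ?_⟩ <;>
      simp [dotProduct_single, mul_div_cancel₀ _ hm, ht]

theorem single_mem_DSub [DecidableEq ι] (α : ι → Fin k → K) {S : Set ι} {i : ι} (hi : i ∉ S)
    (a : K) : Pi.single i a ∈ DSub α S :=
  ⟨0, fun l hl => by simp [Pi.single_eq_of_ne (ne_of_mem_of_not_mem hl hi)]⟩

theorem DSub_image_eq_comap {ι' : Type*} (α : ι → Fin k → K) (φ : ι' → ι) (S : Set ι') :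
    DSub α (φ '' S) = (DSub (fun m => α (φ m)) S).comap (LinearMap.funLeft K K φ) := by
  ext t
  simp only [Submodule.mem_comap, mem_DSub, Set.forall_mem_image, LinearMap.funLeft_apply]

theorem mem_DSub_insert_iff_of_eq_smul {α : ι → Fin k → K} {i j : ι} {c : K} (hc : c ≠ 0)
    (hpar : α i = c • α j) (S : Set ι) {t : ι → K} (ht : t i = c * t j) :
    t ∈ DSub α (insert i S) ↔ t ∈ DSub α (insert j S) := by
  simp only [mem_DSub, Set.forall_mem_insert, hpar, smul_dotProduct, smul_eq_mul, ht,
    mul_right_inj' hc]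

theorem IsCircuit.exists_inter_DSub_pair_eq {α : ι → Fin k → K} {C : Set ι} (hC : IsCircuit α C)
    {i j : ι} (hij : i ≠ j) {c : K} (hc : c ≠ 0) (hj : α j ≠ 0) (hpar : α i = c • α j)
    (hne : C ≠ {i, j}) :
    ∃ C₁, i ∉ C₁ ∧ IsCircuit α C₁ ∧
      (DSub α C : Set (ι → K)) ∩ DSub α {i, j} = (DSub α C₁ : Set (ι → K)) ∩ DSub α {i, j} := by
  by_cases hiC : i ∈ C
  swap
  · exact ⟨C, hiC, hC, rfl⟩
  have hjC : j ∉ C := fun hjC => hne (hC.eq_pair_of_eq_smul hij hiC hjC hpar)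
  set S := C \ {i}
  have hCS : C = insert i S := (Set.insert_sdiff_self_of_mem hiC).symm
  have hiS : i ∉ S := fun h => h.2 rfl
  have hjS : j ∉ S := fun h => hjC h.1
  refine ⟨insert j S, by simp [hij, hiS], ?_, ?_⟩
  · rwa [hCS, isCircuit_insert_iff_of_eq_smul hiS hjS hc hpar] at hC
  · ext t
    simp only [Set.mem_inter_iff, SetLike.mem_coe, coe_DSub_pair hj hpar, Set.mem_ofPred_eq, hCS]
    exact and_congr_left (mem_DSub_insert_iff_of_eq_smul hc hpar S)

theorem bijOn_funLeft_val {i j : ι} (hji : j ≠ i) (c : K) :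
    Set.BijOn (LinearMap.funLeft K K (Subtype.val : {l // l ≠ i} → ι)) {t | t i = c * t j}
      Set.univ := by
  classical
  refine ⟨Set.mapsTo_univ _ _, fun a ha b hb hab => funext fun l => ?_, fun s _ => ?_⟩
  · by_cases hl : l = i
    · have ha : a i = c * a j := ha
      have hb : b i = c * b j := hb
      rw [hl, ha, hb, show a j = b j from congrFun hab ⟨j, hji⟩]
    · exact congrFun hab ⟨l, hl⟩
  · refine ⟨fun l => if h : l = i then c * s ⟨j, hji⟩ else s ⟨l, h⟩, by simp [hji], ?_⟩
    funext m
    simp [m.2]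

theorem funLeft_val_image_inter_DSub_pair {α : ι → Fin k → K} {i j : ι} (hji : j ≠ i) {c : K}
    (hj : α j ≠ 0) (hpar : α i = c • α j) (C' : Set {l // l ≠ i}) :
    LinearMap.funLeft K K (Subtype.val : {l // l ≠ i} → ι) ''
        ((DSub α (Subtype.val '' C') : Set (ι → K)) ∩ DSub α {i, j}) =
      DSub (fun l : {l // l ≠ i} => α l.val) C' := by
  rw [DSub_image_eq_comap, Submodule.comap_coe, Set.inter_comm, Set.image_inter_preimage,
    coe_DSub_pair hj hpar, (bijOn_funLeft_val hji c).image_eq, Set.univ_inter]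

/-- deletion of a parallel hyperplane: if `H_i = H_j` (`α i = c • α j`,
`c ≠ 0`, `i ≠ j`), then the linear map `π : t ↦ (t_l)_{l ≠ i}` maps `D_{ij}`
bijectively onto `K^{n−1}`, and carries the restriction of the discriminantal
arrangement `B(A)` to the hyperplane `D_{ij}` onto the discriminantal arrangement
`B(A \ H_i)`: the family of images of `D_C ∩ D_{ij}` (over circuits `C` of `A` with
`D_C ≠ D_{ij}`) equals the family of hyperplanes `D_{C'}` over circuits `C'` of
`A \ H_i`. -/
theorem deletion_parallel_discriminantal {K : Type*} [Field K] {n k : ℕ}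
    (α : Fin n → (Fin k → K)) (hα : ∀ l, α l ≠ 0)
    (i j : Fin n) (hij : i ≠ j) (c : K) (hc : c ≠ 0) (hpar : α i = c • α j) :
    Set.InjOn (LinearMap.funLeft K K (Subtype.val : {l : Fin n // l ≠ i} → Fin n))
        (DSub α {i, j} : Set (Fin n → K)) ∧
    (LinearMap.funLeft K K (Subtype.val : {l : Fin n // l ≠ i} → Fin n)) ''
        (DSub α {i, j} : Set (Fin n → K)) = Set.univ ∧
    {X : Set ({l : Fin n // l ≠ i} → K) |
        ∃ C : Set (Fin n), IsCircuit α C ∧ DSub α C ≠ DSub α {i, j} ∧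
          X = (LinearMap.funLeft K K (Subtype.val : {l : Fin n // l ≠ i} → Fin n)) ''
            ((DSub α C : Set (Fin n → K)) ∩ (DSub α {i, j} : Set (Fin n → K)))} =
      {X : Set ({l : Fin n // l ≠ i} → K) |
        ∃ C' : Set {l : Fin n // l ≠ i},
          IsCircuit (fun l : {l : Fin n // l ≠ i} => α l.val) C' ∧
          X = (DSub (fun l : {l : Fin n // l ≠ i} => α l.val) C' :
            Set ({l : Fin n // l ≠ i} → K))} := by
  have hD : (DSub α {i, j} : Set (Fin n → K)) = {t | t i = c * t j} := coe_DSub_pair (hα j) hpar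
  have hπ := bijOn_funLeft_val hij.symm c
  refine ⟨hD ▸ hπ.injOn, hD ▸ hπ.image_eq, Set.ext fun X => ⟨?_, ?_⟩⟩
  · rintro ⟨C, hC, hne, rfl⟩
    obtain ⟨C₁, hiC₁, hC₁, hinter⟩ :=
      hC.exists_inter_DSub_pair_eq hij hc (hα j) hpar fun h => hne (h ▸ rfl)
    have himage : Subtype.val '' (Subtype.val ⁻¹' C₁ : Set {l // l ≠ i}) = C₁ :=
      Set.image_preimage_eq_of_subset fun l hl => by
        rw [Subtype.range_coe_subtype]
        exact fun hli => hiC₁ (hli ▸ hl)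
    refine ⟨Subtype.val ⁻¹' C₁, (isCircuit_comp_iff_image Subtype.val_injective _).2 ?_, ?_⟩
    · rwa [himage]
    · rw [hinter, ← funLeft_val_image_inter_DSub_pair hij.symm (hα j) hpar, himage]
  · rintro ⟨C', hC', rfl⟩
    have hiC : i ∉ Subtype.val '' C' := fun ⟨m, _, hm⟩ => m.2 hm
    refine ⟨Subtype.val '' C', (isCircuit_comp_iff_image Subtype.val_injective _).1 hC',
      fun h => ?_, (funLeft_val_image_inter_DSub_pair hij.symm (hα j) hpar C').symm⟩
    have hsingle := single_mem_DSub α hiC (1 : K)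
    rw [h, ← SetLike.mem_coe, hD] at hsingle
    simp [hij.symm] at hsingle
end

section
/- Degeneration decreases rank: Let T be a family of (k+1)-or-larger subsets of [n], let j < n with γ := |{S ∈ T : {n, j} ⊆ S}| > 0, and let T_{n→j} be the degeneration (replace n by j in each member containing n, discarding resulting sets of size ≤ k). If A = {H₁,…,Hₙ} is an arrangement with H_n = H_j (parallel normals) and rank ⋂_{S∈T} D_S(A) ≤ r, then rank ⋂_{S∈T_{n→j}} D_S(A \ H_n) ≤ r − 1, where ranks are codimensions in K^n and K^{n−1} respectively. -/
variable {K : Type*} [Field K] {ι : Type*} {k : ℕ}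

/-- The degeneration `T_{a→b}` of a family of subsets, viewed in the index set with
`a` deleted: members not containing `a` are kept, and in members containing `a` the
index `a` is replaced by `b`, discarding resulting sets of size `≤ k`. -/
def Degen {n k : ℕ} (T : Set (Set (Fin n))) (a b : Fin n) :
    Set (Set {l : Fin n // l ≠ a}) :=
  {S' | (∃ S ∈ T, a ∉ S ∧ S' = {l : {l : Fin n // l ≠ a} | l.val ∈ S}) ∨
    (∃ S ∈ T, a ∈ S ∧ k + 1 ≤ (insert b (S \ {a})).ncard ∧
      S' = {l : {l : Fin n // l ≠ a} | l.val ∈ insert b (S \ {a})})}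

/-
The restriction `t ↦ t|_{[n] ∖ {a}}` maps `⋂_{S∈T} D_S(A)` injectively into
`⋂_{S'∈T_{a→b}} D_{S'}(A ∖ H_a)`. Indeed, a member `S ∈ T` containing both `a` and `b`
forces `t a = c · t b` on the whole intersection, since the two hyperplane equations
differ by the factor `c`. That relation lets a common point of the `H_i^{t_i}`, `i ∈ S`,
also lie on `H_b^{t_b}` whenever `a ∈ S`, so restriction lands in `D_{S'}` after `a` is
replaced by `b`; and it recovers `t a` from `t b`, so restriction loses nothing. Hence
the dimension can only grow while the ambient dimension drops by one.
-/

theorem LinearMap.finrank_le_finrank_of_mapsTo_of_ker {V W : Type*}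
    [AddCommGroup V] [Module K V] [AddCommGroup W] [Module K W]
    (f : V →ₗ[K] W) {p : Submodule K V} {q : Submodule K W} [FiniteDimensional K q]
    (hmaps : ∀ x ∈ p, f x ∈ q) (hker : ∀ x ∈ p, f x = 0 → x = 0) :
    Module.finrank K p ≤ Module.finrank K q :=
  LinearMap.finrank_le_finrank_of_injective (f := f.restrict hmaps) <|
    (LinearMap.injective_restrict_iff hmaps).2 <|
      Submodule.disjoint_def.2 fun x hx hxker => hker x hx hxker

namespace DSub

variable {α : ι → Fin k → K} {a b : ι} {c : K} {S : Set ι} {t : ι → K}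

theorem antitone (α : ι → Fin k → K) : Antitone (DSub α) := by
  rintro S S' hSS' t ⟨x, hx⟩
  exact ⟨x, fun i hi => hx i (hSS' hi)⟩

theorem funLeft_mem {ι' : Type*} (e : ι' → ι) (ht : t ∈ DSub α S) :
    LinearMap.funLeft K K e t ∈ DSub (α ∘ e) (e ⁻¹' S) := by
  obtain ⟨x, hx⟩ := ht
  exact ⟨x, fun i hi => hx (e i) hi⟩

theorem sum_eq_mul_sum_of_parallel (hpar : α a = c • α b) (x : Fin k → K) :
    ∑ j, α a j * x j = c * ∑ j, α b j * x j := by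
  simp [hpar, Finset.mul_sum, mul_assoc]

theorem apply_eq_mul_of_parallel (hpar : α a = c • α b) (ha : a ∈ S) (hb : b ∈ S)
    (ht : t ∈ DSub α S) : t a = c * t b := by
  obtain ⟨x, hx⟩ := ht
  rw [← hx a ha, ← hx b hb, sum_eq_mul_sum_of_parallel hpar]

theorem mem_insert_of_parallel (hpar : α a = c • α b) (hc : c ≠ 0) (ha : a ∈ S)
    (ht : t ∈ DSub α S) (htab : t a = c * t b) : t ∈ DSub α (insert b S) := by
  obtain ⟨x, hx⟩ := ht
  refine ⟨x, ?_⟩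
  rintro i (rfl | hi)
  · exact mul_left_cancel₀ hc (by rw [← htab, ← hx a ha, sum_eq_mul_sum_of_parallel hpar])
  · exact hx i hi

end DSub

theorem eq_zero_of_funLeft_val_eq_zero {a b : ι} (hab : b ≠ a) {c : K} {t : ι → K}
    (htab : t a = c * t b)
    (h0 : LinearMap.funLeft K K (Subtype.val : {l // l ≠ a} → ι) t = 0) : t = 0 := by
  have hoff : ∀ i (hi : i ≠ a), t i = 0 := fun i hi => congrFun h0 ⟨i, hi⟩
  funext i
  by_cases hi : i = a
  · rw [hi, htab, hoff b hab, mul_zero, Pi.zero_apply]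
  · exact hoff i hi

theorem funLeft_val_mem_iInf_DSub_degen {n : ℕ} {α : Fin n → Fin k → K} {a b : Fin n} {c : K}
    (hpar : α a = c • α b) (hc : c ≠ 0) {T : Set (Set (Fin n))} {t : Fin n → K}
    (ht : t ∈ ⨅ S ∈ T, DSub α S) (htab : t a = c * t b) :
    LinearMap.funLeft K K (Subtype.val : {l // l ≠ a} → Fin n) t ∈
      ⨅ S' ∈ Degen (k := k) T a b, DSub (fun l : {l : Fin n // l ≠ a} => α l.val) S' := by
  simp only [Submodule.mem_iInf] at ht ⊢
  rintro S' (⟨S, hS, -, rfl⟩ | ⟨S, hS, haS, -, rfl⟩)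
  · exact DSub.funLeft_mem _ (ht S hS)
  · have hsub : insert b (S \ {a}) ⊆ insert b S := Set.insert_subset_insert Set.sdiff_subset
    exact DSub.antitone _ (Set.preimage_mono hsub)
      (DSub.funLeft_mem _ (DSub.mem_insert_of_parallel hpar hc haS (ht S hS) htab))

theorem degeneration_rank_decrease_general {K : Type*} [Field K] {n k : ℕ}
    (α : Fin n → (Fin k → K))
    (a b : Fin n) (hab : b ≠ a) (c : K) (hc : c ≠ 0) (hpar : α a = c • α b)
    (T : Set (Set (Fin n)))
    (hγ : ∃ S ∈ T, a ∈ S ∧ b ∈ S)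
    (r : ℕ)
    (hr : n - Module.finrank K ↥(⨅ S ∈ T, DSub α S) ≤ r) :
    (n - 1) - Module.finrank K
        ↥(⨅ S' ∈ Degen (k := k) T a b,
          DSub (fun l : {l : Fin n // l ≠ a} => α l.val) S') ≤ r - 1 := by
  obtain ⟨S₀, hS₀, haS₀, hbS₀⟩ := hγ
  have htab : ∀ t ∈ ⨅ S ∈ T, DSub α S, t a = c * t b := fun t ht =>
    DSub.apply_eq_mul_of_parallel hpar haS₀ hbS₀
      ((Submodule.mem_iInf _).1 ((Submodule.mem_iInf _).1 ht S₀) hS₀)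
  have hle := LinearMap.finrank_le_finrank_of_mapsTo_of_ker
    (LinearMap.funLeft K K (Subtype.val : {l // l ≠ a} → Fin n))
    (q := ⨅ S' ∈ Degen (k := k) T a b, DSub (fun l : {l : Fin n // l ≠ a} => α l.val) S')
    (fun t ht => funLeft_val_mem_iInf_DSub_degen hpar hc ht (htab t ht))
    (fun t ht h0 => eq_zero_of_funLeft_val_eq_zero hab (htab t ht) h0)
  omega

/-- degeneration decreases rank: let `T` be a family of subsets of
`[n]` each of size `≥ k+1`, `b ≠ a` with `γ = |{S ∈ T : a, b ∈ S}| > 0`, and suppose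
the arrangement `A` has parallel hyperplanes `H_a = H_b` (`α a = c • α b`, `c ≠ 0`).
If `rank ⋂_{S∈T} D_S(A) ≤ r` (rank = codimension in `K^n`), then
`rank ⋂_{S'∈T_{a→b}} D_{S'}(A ∖ H_a) ≤ r − 1` (codimension in `K^{n−1}`). -/
theorem degeneration_rank_decrease {K : Type*} [Field K] {n k : ℕ}
    (α : Fin n → (Fin k → K)) (hα : ∀ l, α l ≠ 0)
    (a b : Fin n) (hab : b ≠ a) (c : K) (hc : c ≠ 0) (hpar : α a = c • α b)
    (T : Set (Set (Fin n))) (hT : ∀ S ∈ T, k + 1 ≤ S.ncard)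
    (hγ : ∃ S ∈ T, a ∈ S ∧ b ∈ S)
    (r : ℕ)
    (hr : n - Module.finrank K ↥(⨅ S ∈ T, DSub α S) ≤ r) :
    (n - 1) - Module.finrank K
        ↥(⨅ S' ∈ Degen (k := k) T a b,
          DSub (fun l : {l : Fin n // l ≠ a} => α l.val) S') ≤ r - 1 :=
  degeneration_rank_decrease_general α a b hab c hc hpar T hγ r hr
end

section
/- Degenerated wheel equation: Let A be a generic line arrangement in K² with normals α's, and suppose the (distinct) forms on K^n given by α_{i_l i_{l+1} j_l} = Δ_{i_{l+1} j_l} e*_{i_l} − Δ_{i_l j_l} e*_{i_{l+1}} + Δ_{i_l i_{l+1}} e*_{j_l}, for l = 1,…,n (indices of i cyclic mod n, the i_l pairwise distinct, and each i_l appearing in no other form), together with some additional forms not involving any e*_{i_l}, form a minimally linearly dependent set. Then ∏_{l=1}^n Δ_{j_l i_l} − ∏_{l=1}^n Δ_{j_l i_{l+1}} = 0. -/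
/-!
Only the forms `l` and `l + 1` involve the coordinate `e*_{i_{l+1}}`, so reading the dependence
at that coordinate gives the recurrence `c_{l+1} Δ_{i_{l+2} j_{l+1}} = c_l Δ_{i_l j_l}`.
Multiplying around the cycle, the nonzero product of the `c_l` cancels and leaves
`∏ Δ_{i_{l+1} j_l} = ∏ Δ_{i_l j_l}`; antisymmetry of `Δ` turns this into the claim.
-/

/-- The 2×2 determinant `Δ(u,v) = u₀v₁ − u₁v₀` of two vectors in `K²`. -/
def Det2 {K : Type*} [Field K] (u v : Fin 2 → K) : K := u 0 * v 1 - u 1 * v 0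

/-- The normal form `α_{i_l i_{l+1} j_l} = Δ_{i_{l+1} j_l} e*_{i_l} −
Δ_{i_l j_l} e*_{i_{l+1}} + Δ_{i_l i_{l+1}} e*_{j_l}` on `K^N`
(`l+1` taken cyclically in `Fin n`, here `n = m+3`). -/
def degWheelForm {K : Type*} [Field K] {N m : ℕ} (α : Fin N → (Fin 2 → K))
    (i j : Fin (m + 3) → Fin N) (l : Fin (m + 3)) : Fin N → K :=
  Det2 (α (i (l + 1))) (α (j l)) • (Pi.single (i l) 1 : Fin N → K)
    - Det2 (α (i l)) (α (j l)) • (Pi.single (i (l + 1)) 1 : Fin N → K)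
    + Det2 (α (i l)) (α (i (l + 1))) • (Pi.single (j l) 1 : Fin N → K)

theorem det2_swap {K : Type*} [Field K] (u v : Fin 2 → K) : Det2 u v = -Det2 v u := by
  unfold Det2; ring

theorem Fintype.prod_eq_prod_of_shift_mul_eq {G M : Type*} [AddGroup G] [Fintype G]
    [CommMonoidWithZero M] [IsCancelMulZero M] [Nontrivial M] {a x y : G → M} (g : G)
    (ha : ∀ l, a l ≠ 0)
    (h : ∀ l, a (l + g) * x (l + g) = a l * y l) : ∏ l, x l = ∏ l, y l := by
  have hshift : ∏ l, a (l + g) * x (l + g) = ∏ l, a l * x l :=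
    Fintype.prod_equiv (Equiv.addRight g) _ _ fun _ => rfl
  rw [Fintype.prod_congr _ _ h, Finset.prod_mul_distrib, Finset.prod_mul_distrib] at hshift
  exact (mul_left_cancel₀ (Finset.prod_ne_zero_iff.mpr fun l _ => ha l) hshift).symm

namespace degWheelForm

variable {K : Type*} [Field K] {N m : ℕ} (α : Fin N → (Fin 2 → K)) {i j : Fin (m + 3) → Fin N}
  (hi : Function.Injective i) (hij : ∀ l l' : Fin (m + 3), i l ≠ j l')
include hi hij

theorem apply_left (l : Fin (m + 3)) :
    degWheelForm α i j l (i l) = Det2 (α (i (l + 1))) (α (j l)) := by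
  simp [degWheelForm, hi.eq_iff, hij]

theorem apply_right (l : Fin (m + 3)) :
    degWheelForm α i j l (i (l + 1)) = -Det2 (α (i l)) (α (j l)) := by
  simp [degWheelForm, hi.eq_iff, hij]

theorem apply_of_ne (l k : Fin (m + 3)) (hl : k ≠ l) (hl' : k ≠ l + 1) :
    degWheelForm α i j l (i k) = 0 := by
  simp [degWheelForm, hi.eq_iff, hij, hl, hl']

theorem sum_smul_apply_succ (c : Fin (m + 3) → K) (k : Fin (m + 3)) :
    (∑ l, c l • degWheelForm α i j l) (i (k + 1))
      = c (k + 1) * Det2 (α (i (k + 1 + 1))) (α (j (k + 1)))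
        - c k * Det2 (α (i k)) (α (j k)) := by
  have hvanish : ∀ l, l ≠ k + 1 ∧ l ≠ k → (c l • degWheelForm α i j l) (i (k + 1)) = 0 :=
    fun l hl => by
      rw [Pi.smul_apply, apply_of_ne α hi hij l _ (Ne.symm hl.1)
        fun h => hl.2 (add_right_cancel h).symm, smul_zero]
  rw [Finset.sum_apply, Fintype.sum_eq_add (k + 1) k (by simp) hvanish]
  simp only [Pi.smul_apply, smul_eq_mul, apply_left α hi hij, apply_right α hi hij]
  ring

end degWheelForm

theorem degWheelForm_coeff_succ_mul_eq {K : Type*} [Field K] {N m M : ℕ}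
    (α : Fin N → (Fin 2 → K)) {i j : Fin (m + 3) → Fin N}
    (hi : Function.Injective i) (hij : ∀ l l' : Fin (m + 3), i l ≠ j l')
    {w : Fin M → (Fin N → K)} (hw : ∀ (q : Fin M) (l : Fin (m + 3)), w q (i l) = 0)
    {c : Fin (m + 3) → K} {d : Fin M → K}
    (hdep : ∑ l, c l • degWheelForm α i j l + ∑ q, d q • w q = 0) (k : Fin (m + 3)) :
    c (k + 1) * Det2 (α (i (k + 1 + 1))) (α (j (k + 1))) = c k * Det2 (α (i k)) (α (j k)) := by
  have h := congrFun hdep (i (k + 1))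
  rw [Pi.add_apply, degWheelForm.sum_smul_apply_succ α hi hij, Finset.sum_apply] at h
  simpa [hw, sub_eq_zero] using h

theorem degenerated_wheel_equation_general {K : Type*} [Field K] {N m M : ℕ}
    (α : Fin N → (Fin 2 → K))
    (i j : Fin (m + 3) → Fin N)
    (hi : Function.Injective i)
    (hij : ∀ l l' : Fin (m + 3), i l ≠ j l')
    (w : Fin M → (Fin N → K))
    (hw : ∀ (q : Fin M) (l : Fin (m + 3)), w q (i l) = 0)
    (c : Fin (m + 3) → K) (d : Fin M → K)
    (hc : ∀ l, c l ≠ 0)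
    (hdep : ∑ l, c l • degWheelForm α i j l + ∑ q, d q • w q = 0) :
    ∏ l : Fin (m + 3), Det2 (α (j l)) (α (i l))
      - ∏ l : Fin (m + 3), Det2 (α (j l)) (α (i (l + 1))) = 0 := by
  have hprod : ∏ l, Det2 (α (i (l + 1))) (α (j l)) = ∏ l, Det2 (α (i l)) (α (j l)) :=
    Fintype.prod_eq_prod_of_shift_mul_eq 1 hc
      (degWheelForm_coeff_succ_mul_eq α hi hij hw hdep)
  rw [sub_eq_zero, Fintype.prod_congr _ _ fun l => det2_swap (α (j l)) (α (i l)),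
    Fintype.prod_congr _ _ fun l => det2_swap (α (j l)) (α (i (l + 1))),
    Finset.prod_neg, Finset.prod_neg, hprod]

/-- degenerated wheel equation: let `α` be the normals of a generic
line arrangement in `K²` (pairwise linearly independent), with `n = m+3 ≥ 3`, indices
`i : Fin n → Fin N` pairwise distinct and cyclic, `j : Fin n → Fin N` disjoint from
the `i`'s, the forms `degWheelForm α i j l` for `l`, together with additional forms
`w q` not involving any coordinate `e*_{i l}`, forming a minimally linearly dependent
set (i.e. vanishing of a nontrivial combination with all coefficients nonzero).
Then `∏_l Δ_{j_l i_l} − ∏_l Δ_{j_l i_{l+1}} = 0`. -/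
theorem degenerated_wheel_equation {K : Type*} [Field K] {N m M : ℕ}
    (α : Fin N → (Fin 2 → K))
    (hgen : ∀ p q : Fin N, p ≠ q → Det2 (α p) (α q) ≠ 0)
    (i j : Fin (m + 3) → Fin N)
    (hi : Function.Injective i)
    (hij : ∀ l l' : Fin (m + 3), i l ≠ j l')
    (w : Fin M → (Fin N → K))
    (hw : ∀ (q : Fin M) (l : Fin (m + 3)), w q (i l) = 0)
    (c : Fin (m + 3) → K) (d : Fin M → K)
    (hc : ∀ l, c l ≠ 0) (hd : ∀ q, d q ≠ 0)
    (hdep : ∑ l, c l • degWheelForm α i j l + ∑ q, d q • w q = 0) :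
    ∏ l : Fin (m + 3), Det2 (α (j l)) (α (i l))
      - ∏ l : Fin (m + 3), Det2 (α (j l)) (α (i (l + 1))) = 0 :=
  degenerated_wheel_equation_general α i j hi hij w hw c d hc hdep
end
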